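/- For probability distributions P and Q on finite sets (or with densities) and λ > 0, define W_{ℓ,λ}(P, Q) := min over couplings π of P and Q of E_π[ℓ(Y, Ŷ)] + λ KL(π || P ⊗ Q), and the Sinkhorn loss W̄_{ℓ,λ}(P, Q) := 2 W_{ℓ,λ}(P, Q) − W_{ℓ,λ}(P, P) − W_{ℓ,λ}(Q, Q). Then W̄_{ℓ,λ}(P, Q) ≤ 2 W_{ℓ,λ}(P, Q) ≤ W̄_{ℓ,λ}(P, Q) + λ H(P) + λ H(Q), assuming ℓ(y, y) = 0 for all y. -/

import Mathlib

open Real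

/-- Entropic (KL-regularized) optimal transport cost on a finite set:
`W_{ℓ,λ}(P,Q) = min over couplings J of E_J[ℓ] + λ KL(J ‖ P ⊗ Q)`. -/
noncomputable def entOTCost {S : Type*} [Fintype S]
    (l : S → S → ℝ) (lam : ℝ) (P Q : S → ℝ) : ℝ :=
  sInf { c : ℝ | ∃ J : S × S → ℝ,
    (∀ p, 0 ≤ J p) ∧
    (∀ y, ∑ z, J (y, z) = P y) ∧
    (∀ z, ∑ y, J (y, z) = Q z) ∧
    c = (∑ p : S × S, J p * l p.1 p.2) +
        lam * ∑ p : S × S, J p * Real.log (J p / (P p.1 * Q p.2)) }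

/-- Shannon entropy of a distribution on a finite set. -/
noncomputable def shEntropy {S : Type*} [Fintype S] (P : S → ℝ) : ℝ :=
  -(∑ y, P y * Real.log (P y))

/-
The identity coupling `y ↦ (y, y)` of `P` with itself costs nothing under `ℓ` and has
`KL(π ‖ P ⊗ P) = ∑ P y log (P y / P y ^ 2) = H(P)`, so `0 ≤ W(P,P) ≤ λ H(P)`, the lower bound
being Gibbs' inequality. Both inequalities of the sandwich follow from these two bounds.
-/

lemma sub_le_mul_log_div {a b : ℝ} (ha : 0 ≤ a) (hb : 0 ≤ b) (hab : b = 0 → a = 0) :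
    a - b ≤ a * log (a / b) := by
  rcases ha.eq_or_lt with rfl | ha
  · simpa using hb
  have hb : 0 < b := hb.lt_of_ne fun h => ha.ne' (hab h.symm)
  calc a - b = a * (1 - (a / b)⁻¹) := by field_simp
    _ ≤ a * log (a / b) := by gcongr; exact one_sub_inv_le_log_of_pos (by positivity)

/-- Gibbs' inequality for finitely supported nonnegative weights. -/
lemma sum_mul_log_div_nonneg {ι : Type*} [Fintype ι] {J M : ι → ℝ}
    (hJ : ∀ i, 0 ≤ J i) (hM : ∀ i, 0 ≤ M i) (habs : ∀ i, M i = 0 → J i = 0)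
    (hmass : ∑ i, M i ≤ ∑ i, J i) :
    0 ≤ ∑ i, J i * log (J i / M i) :=
  calc 0 ≤ ∑ i, (J i - M i) := by rw [Finset.sum_sub_distrib]; linarith
    _ ≤ ∑ i, J i * log (J i / M i) :=
      Finset.sum_le_sum fun i _ => sub_le_mul_log_div (hJ i) (hM i) (habs i)

section Coupling

variable {S : Type*} [Fintype S]

def IsCoupling (P Q : S → ℝ) (J : S × S → ℝ) : Prop :=
  (∀ p, 0 ≤ J p) ∧ (∀ y, ∑ z, J (y, z) = P y) ∧ (∀ z, ∑ y, J (y, z) = Q z)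

/-- The objective `E_J[ℓ] + λ KL(J ‖ P ⊗ Q)` minimized in `entOTCost`. -/
noncomputable def entCost (l : S → S → ℝ) (lam : ℝ) (P Q : S → ℝ) (J : S × S → ℝ) : ℝ :=
  (∑ p : S × S, J p * l p.1 p.2) + lam * ∑ p : S × S, J p * log (J p / (P p.1 * Q p.2))

lemma entOTCost_eq_sInf (l : S → S → ℝ) (lam : ℝ) (P Q : S → ℝ) :
    entOTCost l lam P Q = sInf (entCost l lam P Q '' {J | IsCoupling P Q J}) := by
  simp only [entOTCost, entCost, IsCoupling, Set.image, Set.mem_ofPred_eq, and_assoc, eq_comm]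

namespace IsCoupling

variable {P Q : S → ℝ} {J : S × S → ℝ}

lemma sum_eq (hJ : IsCoupling P Q J) : ∑ p, J p = ∑ y, P y := by
  rw [Fintype.sum_prod_type]
  exact Finset.sum_congr rfl fun y _ => hJ.2.1 y

lemma eq_zero_of_mul_eq_zero (hJ : IsCoupling P Q J) {p : S × S} (hp : P p.1 * Q p.2 = 0) :
    J p = 0 := by
  obtain ⟨hJ0, hJP, hJQ⟩ := hJ
  rcases mul_eq_zero.mp hp with h | h
  · rw [← hJP p.1, Finset.sum_eq_zero_iff_of_nonneg fun z _ => hJ0 _] at h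
    exact h p.2 (Finset.mem_univ _)
  · rw [← hJQ p.2, Finset.sum_eq_zero_iff_of_nonneg fun y _ => hJ0 _] at h
    exact h p.1 (Finset.mem_univ _)

lemma kl_nonneg (hJ : IsCoupling P Q J) (hP0 : ∀ y, 0 ≤ P y) (hQ0 : ∀ y, 0 ≤ Q y)
    (hQ1 : ∑ y, Q y = 1) :
    0 ≤ ∑ p : S × S, J p * log (J p / (P p.1 * Q p.2)) := by
  refine sum_mul_log_div_nonneg hJ.1 (fun p => mul_nonneg (hP0 p.1) (hQ0 p.2))
    (fun p => hJ.eq_zero_of_mul_eq_zero) (le_of_eq ?_)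
  rw [hJ.sum_eq, Fintype.sum_prod_type]
  simp_rw [← Finset.mul_sum, hQ1, mul_one]

lemma entCost_nonneg {l : S → S → ℝ} {lam : ℝ} (hJ : IsCoupling P Q J) (hlam : 0 ≤ lam)
    (hlnn : ∀ y z, 0 ≤ l y z) (hP0 : ∀ y, 0 ≤ P y) (hQ0 : ∀ y, 0 ≤ Q y)
    (hQ1 : ∑ y, Q y = 1) :
    0 ≤ entCost l lam P Q J :=
  add_nonneg (Finset.sum_nonneg fun p _ => mul_nonneg (hJ.1 p) (hlnn p.1 p.2))
    (mul_nonneg hlam (hJ.kl_nonneg hP0 hQ0 hQ1))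

end IsCoupling

lemma entOTCost_nonneg {l : S → S → ℝ} {lam : ℝ} {P Q : S → ℝ} (hlam : 0 ≤ lam)
    (hlnn : ∀ y z, 0 ≤ l y z) (hP0 : ∀ y, 0 ≤ P y) (hQ0 : ∀ y, 0 ≤ Q y)
    (hQ1 : ∑ y, Q y = 1) :
    0 ≤ entOTCost l lam P Q := by
  rw [entOTCost_eq_sInf]
  refine Real.sInf_nonneg ?_
  rintro _ ⟨J, hJ, rfl⟩
  exact IsCoupling.entCost_nonneg hJ hlam hlnn hP0 hQ0 hQ1

def diagCoupling [DecidableEq S] (P : S → ℝ) (p : S × S) : ℝ :=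
  if p.1 = p.2 then P p.1 else 0

lemma isCoupling_diagCoupling [DecidableEq S] {P : S → ℝ} (hP0 : ∀ y, 0 ≤ P y) :
    IsCoupling P P (diagCoupling P) := by
  refine ⟨fun p => ?_, fun y => ?_, fun z => ?_⟩
  · unfold diagCoupling; split_ifs <;> simp [hP0]
  · simp [diagCoupling]
  · simp [diagCoupling]

lemma entCost_diagCoupling [DecidableEq S] {l : S → S → ℝ} (hl0 : ∀ y, l y y = 0)
    (lam : ℝ) (P : S → ℝ) :
    entCost l lam P P (diagCoupling P) = lam * shEntropy P := by
  simp [entCost, diagCoupling, Fintype.sum_prod_type, hl0, shEntropy]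

lemma entOTCost_self_le {l : S → S → ℝ} {lam : ℝ} (hlam : 0 ≤ lam) (hl0 : ∀ y, l y y = 0)
    (hlnn : ∀ y z, 0 ≤ l y z) {P : S → ℝ} (hP0 : ∀ y, 0 ≤ P y) (hP1 : ∑ y, P y = 1) :
    entOTCost l lam P P ≤ lam * shEntropy P := by
  classical
  rw [entOTCost_eq_sInf, ← entCost_diagCoupling hl0]
  refine csInf_le ⟨0, ?_⟩ ⟨diagCoupling P, isCoupling_diagCoupling hP0, rfl⟩
  rintro _ ⟨J, hJ, rfl⟩
  exact IsCoupling.entCost_nonneg hJ hlam hlnn hP0 hP0 hP1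

end Coupling

/-- Lemma 3 (Sinkhorn loss sandwich): with `W̄ = 2W(P,Q) − W(P,P) − W(Q,Q)`,
`W̄(P,Q) ≤ 2 W(P,Q) ≤ W̄(P,Q) + λH(P) + λH(Q)`. -/
theorem sinkhorn_loss_sandwich {S : Type*} [Fintype S]
    (l : S → S → ℝ) (lam : ℝ) (hlam : 0 < lam)
    (hl0 : ∀ y, l y y = 0) (hlnn : ∀ y z, 0 ≤ l y z)
    (P Q : S → ℝ)
    (hP0 : ∀ y, 0 ≤ P y) (hP1 : ∑ y, P y = 1)
    (hQ0 : ∀ y, 0 ≤ Q y) (hQ1 : ∑ y, Q y = 1) :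
    (2 * entOTCost l lam P Q - entOTCost l lam P P - entOTCost l lam Q Q)
        ≤ 2 * entOTCost l lam P Q ∧
    2 * entOTCost l lam P Q ≤
      (2 * entOTCost l lam P Q - entOTCost l lam P P - entOTCost l lam Q Q)
        + lam * shEntropy P + lam * shEntropy Q := by
  have hPP : 0 ≤ entOTCost l lam P P := entOTCost_nonneg hlam.le hlnn hP0 hP0 hP1
  have hQQ : 0 ≤ entOTCost l lam Q Q := entOTCost_nonneg hlam.le hlnn hQ0 hQ0 hQ1
  have hPH : entOTCost l lam P P ≤ lam * shEntropy P :=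
    entOTCost_self_le hlam.le hl0 hlnn hP0 hP1
  have hQH : entOTCost l lam Q Q ≤ lam * shEntropy Q :=
    entOTCost_self_le hlam.le hl0 hlnn hQ0 hQ1
  constructor <;> linarith
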